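/- arXiv:2007.00401 — 7 statements merged into one kernel-verified Lean document; each statement's English description precedes it below -/
import Mathlib

section
/- For every α > 1 there exists a constant c = c(α) > 0 such that for all a, b ∈ ℝ^N one has ‖b − a‖^α ≤ c · ‖b^α − a^α‖. -/
/-!
Monotonicity of `x ↦ ‖x‖^(α-1) • x` in the strong form
`2 ⟪b^α - a^α, b - a⟫ ≥ (‖b‖^(α-1) + ‖a‖^(α-1)) ‖b - a‖²`,
which follows from a polarization identity because `‖·‖^(α-1)` and `‖·‖²` increase together.
Since `‖b - a‖^(α-1) ≤ 2^(α-1) (‖b‖^(α-1) + ‖a‖^(α-1))`, Cauchy–Schwarz then gives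
`‖b - a‖^(α+1) ≤ 2^α ‖b^α - a^α‖ ‖b - a‖`.
-/

noncomputable section

/-- The signed power `x^m := ‖x‖^(m-1) • x` on `ℝ^N` (Euclidean norm, `0^m := 0`). -/
def vpow {N : ℕ} (m : ℝ) (x : EuclideanSpace ℝ (Fin N)) : EuclideanSpace ℝ (Fin N) :=
  (‖x‖ ^ (m - 1)) • x

namespace Real

theorem add_rpow_le_two_rpow_mul_rpow_add_rpow {p a b : ℝ} (ha : 0 ≤ a) (hb : 0 ≤ b)
    (hp : 0 ≤ p) : (a + b) ^ p ≤ 2 ^ p * (a ^ p + b ^ p) := calc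
  (a + b) ^ p ≤ (2 * max a b) ^ p := by
    gcongr
    rw [two_mul]; gcongr <;> simp
  _ = 2 ^ p * max a b ^ p := mul_rpow zero_le_two (le_max_of_le_left ha)
  _ = 2 ^ p * max (a ^ p) (b ^ p) := by rw [rpow_max ha hb hp]
  _ ≤ 2 ^ p * (a ^ p + b ^ p) := by
    gcongr; exact max_le_add_of_nonneg (rpow_nonneg ha p) (rpow_nonneg hb p)

theorem rpow_sub_rpow_mul_sq_sub_sq_nonneg {p x y : ℝ} (hx : 0 ≤ x) (hy : 0 ≤ y)
    (hp : 0 ≤ p) : 0 ≤ (x ^ p - y ^ p) * (x ^ 2 - y ^ 2) := by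
  rcases le_total y x with h | h
  · apply mul_nonneg <;> rw [sub_nonneg] <;> gcongr
  · apply mul_nonneg_of_nonpos_of_nonpos <;> rw [sub_nonpos] <;> gcongr

end Real

theorem norm_sub_rpow_le_two_rpow_mul {E : Type*} [SeminormedAddGroup E] {β : ℝ} (hβ : 0 ≤ β)
    (a b : E) : ‖b - a‖ ^ β ≤ 2 ^ β * (‖b‖ ^ β + ‖a‖ ^ β) :=
  (Real.rpow_le_rpow (norm_nonneg _) (norm_sub_le b a) hβ).trans
    (Real.add_rpow_le_two_rpow_mul_rpow_add_rpow (norm_nonneg b) (norm_nonneg a) hβ)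

section InnerProductSpace

open RealInnerProductSpace

variable {E : Type*} [NormedAddCommGroup E] [InnerProductSpace ℝ E]

theorem inner_smul_sub_smul_sub_eq (a b : E) (x y : ℝ) :
    ⟪x • b - y • a, b - a⟫ =
      (x + y) / 2 * ‖b - a‖ ^ 2 + (x - y) / 2 * (‖b‖ ^ 2 - ‖a‖ ^ 2) := by
  rw [norm_sub_sq_real]
  simp only [inner_sub_left, inner_sub_right, real_inner_smul_left,
    real_inner_self_eq_norm_sq, real_inner_comm a b]
  ring

theorem mul_norm_sub_sq_le_inner_rpow_norm_smul_sub {β : ℝ} (hβ : 0 ≤ β) (a b : E) :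
    (‖b‖ ^ β + ‖a‖ ^ β) * ‖b - a‖ ^ 2 ≤ 2 * ⟪‖b‖ ^ β • b - ‖a‖ ^ β • a, b - a⟫ := by
  rw [inner_smul_sub_smul_sub_eq]
  nlinarith [Real.rpow_sub_rpow_mul_sq_sub_sq_nonneg (norm_nonneg b) (norm_nonneg a) hβ]

theorem norm_sub_rpow_add_one_le {β : ℝ} (hβ : 0 ≤ β) (a b : E) :
    ‖b - a‖ ^ (β + 1) ≤ 2 ^ (β + 1) * ‖‖b‖ ^ β • b - ‖a‖ ^ β • a‖ := by
  rcases (norm_nonneg (b - a)).eq_or_lt' with hd | hd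
  · rw [hd, Real.zero_rpow (by positivity)]
    positivity
  set d := ‖b - a‖
  have key : d ^ (β + 1) * d ≤ 2 ^ (β + 1) * ‖‖b‖ ^ β • b - ‖a‖ ^ β • a‖ * d := calc
    d ^ (β + 1) * d = d ^ β * d ^ 2 := by rw [Real.rpow_add_one hd.ne']; ring
    _ ≤ 2 ^ β * (‖b‖ ^ β + ‖a‖ ^ β) * d ^ 2 := by
      gcongr; exact norm_sub_rpow_le_two_rpow_mul hβ a b
    _ ≤ 2 ^ β * (2 * ⟪‖b‖ ^ β • b - ‖a‖ ^ β • a, b - a⟫) := by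
      rw [mul_assoc]
      exact mul_le_mul_of_nonneg_left (mul_norm_sub_sq_le_inner_rpow_norm_smul_sub hβ a b)
        (by positivity)
    _ ≤ 2 ^ β * (2 * (‖‖b‖ ^ β • b - ‖a‖ ^ β • a‖ * d)) := by
      gcongr; exact real_inner_le_norm _ _
    _ = 2 ^ (β + 1) * ‖‖b‖ ^ β • b - ‖a‖ ^ β • a‖ * d := by
      rw [Real.rpow_add_one two_ne_zero]; ring
  exact le_of_mul_le_mul_right key hd

end InnerProductSpace

theorem norm_sub_rpow_le_general {N : ℕ} (α : ℝ) (hα : 1 < α) :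
    ∃ c : ℝ, 0 < c ∧ ∀ a b : EuclideanSpace ℝ (Fin N),
      ‖b - a‖ ^ α ≤ c * ‖vpow α b - vpow α a‖ := by
  refine ⟨2 ^ α, by positivity, fun a b => ?_⟩
  have h := norm_sub_rpow_add_one_le (sub_nonneg.mpr hα.le) a b
  rwa [sub_add_cancel] at h

/-- For every `α > 1` there exists `c = c(α) > 0` such that for all `a, b ∈ ℝ^N`,
`‖b - a‖^α ≤ c * ‖b^α - a^α‖`. -/
theorem norm_sub_rpow_le {N : ℕ} (hN : 1 ≤ N) (α : ℝ) (hα : 1 < α) :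
    ∃ c : ℝ, 0 < c ∧ ∀ a b : EuclideanSpace ℝ (Fin N),
      ‖b - a‖ ^ α ≤ c * ‖vpow α b - vpow α a‖ :=
  norm_sub_rpow_le_general α hα

end
end

section
/- For every m > 0 there exists a constant c = c(m) ≥ 1 such that for all u, g ∈ ℝ^N: (1/c) · I_m(u,g) ≤ ‖u^{(m+1)/2} − g^{(m+1)/2}‖² ≤ c · I_m(u,g). In particular I_m(u,g) ≥ 0. -/
open scoped RealInnerProductSpace

noncomputable section

/-- The boundary term `I_m(u,g) := (1/(m+1))·(‖u‖^{m+1} − ‖g‖^{m+1}) − g^m · (u − g)`. -/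
def Ifun {N : ℕ} (m : ℝ) (u g : EuclideanSpace ℝ (Fin N)) : ℝ :=
  (1 / (m + 1)) * (‖u‖ ^ (m + 1) - ‖g‖ ^ (m + 1)) - ⟪vpow m g, u - g⟫

/-!
Write `a = ‖u‖`, `b = ‖g‖`, `p = m + 1`, `θ = 1/p`, `X = a^p`, `Y = b^p`. For fixed norms,
`I_m(u,g)` and `‖u^{p/2} − g^{p/2}‖²` are both affine in `⟪u, g⟫ ∈ [-ab, ab]`, so it suffices
to compare them at the two endpoints, where they become `θX + (1-θ)Y ∓ X^θ Y^(1-θ)` and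
`(√X ∓ √Y)²`. These are comparable, with constant `2 / min θ (1-θ)`, by weighted AM-GM; the
one non-obvious bound is `min θ (1-θ) (√X - √Y)² ≤ θX + (1-θ)Y - X^θ Y^(1-θ)`, which is AM-GM
for `X, Y, √X√Y` with weights `θ - l, 1 - θ - l, 2l`, `l = min θ (1-θ)`.
-/

namespace Real

variable {θ X Y : ℝ}

theorem rpow_mul_rpow_one_sub (hX : 0 ≤ X) : X ^ θ * X ^ (1 - θ) = X := by
  rw [← rpow_add' hX (by norm_num), add_sub_cancel, rpow_one]

theorem rpow_sub_one_mul_self (hX : 0 ≤ X) (hθ : θ ≠ 0) : X ^ (θ - 1) * X = X ^ θ := by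
  rw [← rpow_add_one' hX (by simpa using hθ), sub_add_cancel]

theorem sqrt_rpow_eq_rpow_div_two (hX : 0 ≤ X) (s : ℝ) : √(X ^ s) = X ^ (s / 2) := by
  rw [sqrt_eq_rpow, ← rpow_mul hX, mul_one_div]

theorem two_mul_sqrt_mul_sqrt_le_geom_mean_add (hX : 0 ≤ X) (hY : 0 ≤ Y) :
    2 * √X * √Y ≤ X ^ θ * Y ^ (1 - θ) + X ^ (1 - θ) * Y ^ θ := by
  set G := X ^ θ * Y ^ (1 - θ)
  set G' := X ^ (1 - θ) * Y ^ θ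
  have hG : 0 ≤ G := by positivity
  have hG' : 0 ≤ G' := by positivity
  have hGG' : G * G' = X * Y := by
    calc G * G' = (X ^ θ * X ^ (1 - θ)) * (Y ^ θ * Y ^ (1 - θ)) := by ring
      _ = X * Y := by rw [rpow_mul_rpow_one_sub hX, rpow_mul_rpow_one_sub hY]
  calc 2 * √X * √Y = 2 * √G * √G' := by
        rw [mul_assoc, mul_assoc, ← sqrt_mul hX, ← sqrt_mul hG, hGG']
    _ ≤ √G ^ 2 + √G' ^ 2 := two_mul_le_add_sq _ _
    _ = G + G' := by rw [sq_sqrt hG, sq_sqrt hG']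

section WeightedMean

variable (hθ₀ : 0 ≤ θ) (hθ₁ : θ ≤ 1) (hX : 0 ≤ X) (hY : 0 ≤ Y)
include hθ₀ hθ₁ hX hY

theorem geom_mean_le_weighted_arith_mean : X ^ θ * Y ^ (1 - θ) ≤ θ * X + (1 - θ) * Y :=
  geom_mean_le_arith_mean2_weighted hθ₀ (by linarith) hX hY (by ring)

theorem weighted_mean_sub_geom_mean_le :
    θ * X + (1 - θ) * Y - X ^ θ * Y ^ (1 - θ) ≤ (√X - √Y) ^ 2 := by
  have hAMGM : X ^ (1 - θ) * Y ^ θ ≤ (1 - θ) * X + θ * Y :=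
    geom_mean_le_arith_mean2_weighted (by linarith) hθ₀ hX hY (by ring)
  have := two_mul_sqrt_mul_sqrt_le_geom_mean_add (θ := θ) hX hY
  nlinarith [sq_sqrt hX, sq_sqrt hY]

theorem min_mul_sq_le_weighted_mean_sub_geom_mean :
    min θ (1 - θ) * (√X - √Y) ^ 2 ≤ θ * X + (1 - θ) * Y - X ^ θ * Y ^ (1 - θ) := by
  set l := min θ (1 - θ)
  have hl₀ : 0 ≤ l := le_min hθ₀ (by linarith)
  have hl₁ : l ≤ θ := min_le_left _ _
  have hl₂ : l ≤ 1 - θ := min_le_right _ _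
  have hAMGM := geom_mean_le_arith_mean3_weighted (sub_nonneg.2 hl₁) (sub_nonneg.2 hl₂)
    (by positivity : 0 ≤ 2 * l) hX hY (by positivity : 0 ≤ √X * √Y) (by ring)
  have hW : (√X * √Y) ^ (2 * l) = X ^ l * Y ^ l := by
    rw [mul_rpow (sqrt_nonneg X) (sqrt_nonneg Y), sqrt_eq_rpow, sqrt_eq_rpow,
      ← rpow_mul hX, ← rpow_mul hY, show 1 / 2 * (2 * l) = l by ring]
  have hG : X ^ (θ - l) * Y ^ (1 - θ - l) * (X ^ l * Y ^ l) = X ^ θ * Y ^ (1 - θ) := by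
    rw [mul_mul_mul_comm, ← rpow_add_of_nonneg hX (sub_nonneg.2 hl₁) hl₀,
      ← rpow_add_of_nonneg hY (sub_nonneg.2 hl₂) hl₀, sub_add_cancel, sub_add_cancel]
  rw [hW, hG] at hAMGM
  nlinarith [sq_sqrt hX, sq_sqrt hY]

theorem weighted_mean_add_geom_mean_le :
    θ * X + (1 - θ) * Y + X ^ θ * Y ^ (1 - θ) ≤ 2 * (√X + √Y) ^ 2 := by
  have := geom_mean_le_weighted_arith_mean hθ₀ hθ₁ hX hY
  nlinarith [sq_sqrt hX, sq_sqrt hY, sqrt_nonneg X, sqrt_nonneg Y]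

theorem min_mul_sq_le_weighted_mean_add_geom_mean :
    min θ (1 - θ) * (√X + √Y) ^ 2 ≤ 2 * (θ * X + (1 - θ) * Y + X ^ θ * Y ^ (1 - θ)) := by
  have hl₀ : 0 ≤ min θ (1 - θ) := le_min hθ₀ (by linarith)
  have hl₁ : min θ (1 - θ) ≤ θ := min_le_left _ _
  have hl₂ : min θ (1 - θ) ≤ 1 - θ := min_le_right _ _
  have hG : 0 ≤ X ^ θ * Y ^ (1 - θ) := by positivity
  have hsq : (√X + √Y) ^ 2 ≤ 2 * (X + Y) := by
    nlinarith [sq_sqrt hX, sq_sqrt hY, sq_nonneg (√X - √Y)]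
  nlinarith [mul_le_mul_of_nonneg_left hsq hl₀]

end WeightedMean

end Real

theorem sub_mul_le_sub_mul_of_abs_le {α β γ δ s t : ℝ} (ht : |t| ≤ s)
    (h_right : α - β * s ≤ γ - δ * s) (h_left : α + β * s ≤ γ + δ * s) :
    α - β * t ≤ γ - δ * t := by
  obtain ⟨ht₁, ht₂⟩ := abs_le.1 ht
  rcases (abs_nonneg t).trans ht |>.eq_or_lt with rfl | hs
  · obtain rfl : t = 0 := by linarith
    simpa using h_right
  · refine le_of_mul_le_mul_left ?_ (by positivity : 0 < 2 * s)
    nlinarith [mul_nonneg (by linarith : 0 ≤ s + t) (sub_nonneg.2 h_right),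
      mul_nonneg (by linarith : 0 ≤ s - t) (sub_nonneg.2 h_left)]

def comparisonConst (θ : ℝ) : ℝ := 2 / min θ (1 - θ)

theorem two_le_comparisonConst {θ : ℝ} (hθ₀ : 0 < θ) (hθ₁ : θ < 1) : 2 ≤ comparisonConst θ := by
  have hl : 0 < min θ (1 - θ) := lt_min hθ₀ (by linarith)
  rw [comparisonConst, le_div_iff₀ hl]
  linarith [min_le_left θ (1 - θ)]

theorem comparisonConst_mul_min {θ : ℝ} (hθ₀ : 0 < θ) (hθ₁ : θ < 1) :
    comparisonConst θ * min θ (1 - θ) = 2 :=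
  div_mul_cancel₀ _ (lt_min hθ₀ (by linarith)).ne'

theorem weighted_mean_gap_comparison_of_abs_le {θ X Y k k' s t : ℝ} (hθ₀ : 0 < θ) (hθ₁ : θ < 1)
    (hX : 0 ≤ X) (hY : 0 ≤ Y) (ht : |t| ≤ s) (hk : k * s = X ^ θ * Y ^ (1 - θ))
    (hk' : k' * s = √X * √Y) :
    X + Y - 2 * k' * t ≤ comparisonConst θ * (θ * X + (1 - θ) * Y - k * t) ∧
      θ * X + (1 - θ) * Y - k * t ≤ comparisonConst θ * (X + Y - 2 * k' * t) := by
  set c := comparisonConst θ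
  have hc₂ : 2 ≤ c := two_le_comparisonConst hθ₀ hθ₁
  have hcl : c * min θ (1 - θ) = 2 := comparisonConst_mul_min hθ₀ hθ₁
  have hsub := Real.min_mul_sq_le_weighted_mean_sub_geom_mean hθ₀.le hθ₁.le hX hY
  have hadd := Real.min_mul_sq_le_weighted_mean_add_geom_mean hθ₀.le hθ₁.le hX hY
  have hsubc : (√X - √Y) ^ 2 ≤ c * (θ * X + (1 - θ) * Y - X ^ θ * Y ^ (1 - θ)) := by
    nlinarith [mul_le_mul_of_nonneg_left hsub (by linarith : 0 ≤ c), sq_nonneg (√X - √Y), hcl]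
  have haddc : (√X + √Y) ^ 2 ≤ c * (θ * X + (1 - θ) * Y + X ^ θ * Y ^ (1 - θ)) := by
    nlinarith [mul_le_mul_of_nonneg_left hadd (by linarith : 0 ≤ c), hcl]
  have hsubc' : θ * X + (1 - θ) * Y - X ^ θ * Y ^ (1 - θ) ≤ c * (√X - √Y) ^ 2 :=
    (Real.weighted_mean_sub_geom_mean_le hθ₀.le hθ₁.le hX hY).trans
      (le_mul_of_one_le_left (sq_nonneg _) (by linarith))
  have haddc' : θ * X + (1 - θ) * Y + X ^ θ * Y ^ (1 - θ) ≤ c * (√X + √Y) ^ 2 :=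
    (Real.weighted_mean_add_geom_mean_le hθ₀.le hθ₁.le hX hY).trans
      (mul_le_mul_of_nonneg_right hc₂ (sq_nonneg _))
  have hXs := Real.sq_sqrt hX
  have hYs := Real.sq_sqrt hY
  -- both sides are affine in `t`; at `t = ±s` they are the inequalities above
  constructor
  · have := sub_mul_le_sub_mul_of_abs_le (α := X + Y) (β := 2 * k')
      (γ := c * (θ * X + (1 - θ) * Y)) (δ := c * k) ht
      (by linear_combination hsubc - 2 * hk' + c * hk - hXs - hYs)
      (by linear_combination haddc + 2 * hk' - c * hk - hXs - hYs)
    linarith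
  · have := sub_mul_le_sub_mul_of_abs_le (α := θ * X + (1 - θ) * Y) (β := k)
      (γ := c * (X + Y)) (δ := c * (2 * k')) ht
      (by linear_combination hsubc' - hk + 2 * c * hk' + c * hXs + c * hYs)
      (by linear_combination haddc' + hk - 2 * c * hk' + c * hXs + c * hYs)
    linarith

section vpow

variable {N : ℕ}

theorem norm_vpow {r : ℝ} (hr : r ≠ 0) (x : EuclideanSpace ℝ (Fin N)) : ‖vpow r x‖ = ‖x‖ ^ r := by
  rw [vpow, norm_smul, Real.norm_of_nonneg (by positivity),
    Real.rpow_sub_one_mul_self (norm_nonneg x) hr]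

theorem norm_vpow_sub_vpow_sq {r : ℝ} (hr : r ≠ 0) (u g : EuclideanSpace ℝ (Fin N)) :
    ‖vpow r u - vpow r g‖ ^ 2 =
      (‖u‖ ^ r) ^ 2 + (‖g‖ ^ r) ^ 2 - 2 * (‖u‖ ^ (r - 1) * ‖g‖ ^ (r - 1)) * ⟪u, g⟫ := by
  rw [norm_sub_sq_real, norm_vpow hr, norm_vpow hr, vpow, vpow, real_inner_smul_left,
    real_inner_smul_right]
  ring

theorem Ifun_eq {m : ℝ} (hm : m + 1 ≠ 0) (u g : EuclideanSpace ℝ (Fin N)) :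
    Ifun m u g = 1 / (m + 1) * ‖u‖ ^ (m + 1) + (1 - 1 / (m + 1)) * ‖g‖ ^ (m + 1)
      - ‖g‖ ^ (m - 1) * ⟪u, g⟫ := by
  have hg : ‖g‖ ^ (m + 1) = ‖g‖ ^ (m - 1) * ‖g‖ ^ 2 := by
    rw [← Real.rpow_add_natCast' (norm_nonneg g) (by convert hm using 1; push_cast; ring)]
    push_cast; ring_nf
  rw [Ifun, vpow, real_inner_smul_left, inner_sub_right, real_inner_self_eq_norm_sq,
    real_inner_comm, hg]
  ring

theorem norm_vpow_sub_vpow_sq_comparison {m : ℝ} (hm : 0 < m) (u g : EuclideanSpace ℝ (Fin N)) :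
    ‖vpow ((m + 1) / 2) u - vpow ((m + 1) / 2) g‖ ^ 2 ≤
        comparisonConst (1 / (m + 1)) * Ifun m u g ∧
      Ifun m u g ≤
        comparisonConst (1 / (m + 1)) * ‖vpow ((m + 1) / 2) u - vpow ((m + 1) / 2) g‖ ^ 2 := by
  have hp : 0 < m + 1 := by linarith
  have hθ₁ : 1 / (m + 1) < 1 := by rw [div_lt_one hp]; linarith
  have hsqrt (x : EuclideanSpace ℝ (Fin N)) : √(‖x‖ ^ (m + 1)) = ‖x‖ ^ ((m + 1) / 2) :=
    Real.sqrt_rpow_eq_rpow_div_two (norm_nonneg x) _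
  rw [Ifun_eq hp.ne', norm_vpow_sub_vpow_sq (by positivity), ← hsqrt u, ← hsqrt g,
    Real.sq_sqrt (by positivity), Real.sq_sqrt (by positivity)]
  refine weighted_mean_gap_comparison_of_abs_le (by positivity) hθ₁ (by positivity) (by positivity)
    (abs_real_inner_le_norm u g) ?_ ?_
  · rw [one_div, Real.rpow_rpow_inv (norm_nonneg u) hp.ne', ← Real.rpow_mul (norm_nonneg g),
      show (m + 1) * (1 - (m + 1)⁻¹) = m by field_simp; ring,
      ← Real.rpow_sub_one_mul_self (norm_nonneg g) hm.ne']
    ring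
  · have hr : (m + 1) / 2 ≠ 0 := by positivity
    rw [hsqrt u, hsqrt g, mul_mul_mul_comm, Real.rpow_sub_one_mul_self (norm_nonneg u) hr,
      Real.rpow_sub_one_mul_self (norm_nonneg g) hr]

end vpow

theorem boundary_term_comparison_general {N : ℕ} (m : ℝ) (hm : 0 < m) :
    ∃ c : ℝ, 1 ≤ c ∧ ∀ u g : EuclideanSpace ℝ (Fin N),
      (1 / c) * Ifun m u g ≤ ‖vpow ((m + 1) / 2) u - vpow ((m + 1) / 2) g‖ ^ 2 ∧
      ‖vpow ((m + 1) / 2) u - vpow ((m + 1) / 2) g‖ ^ 2 ≤ c * Ifun m u g ∧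
      0 ≤ Ifun m u g := by
  have hc₂ : 2 ≤ comparisonConst (1 / (m + 1)) :=
    two_le_comparisonConst (by positivity) (by rw [div_lt_one (by linarith)]; linarith)
  have hc : 0 < comparisonConst (1 / (m + 1)) := by linarith
  refine ⟨comparisonConst (1 / (m + 1)), by linarith, fun u g => ?_⟩
  obtain ⟨hD, hI⟩ := norm_vpow_sub_vpow_sq_comparison hm u g
  refine ⟨?_, hD, nonneg_of_mul_nonneg_right ((sq_nonneg _).trans hD) hc⟩
  rw [one_div_mul_eq_div, div_le_iff₀ hc, mul_comm]
  exact hI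

/-- For every `m > 0` there is `c = c(m) ≥ 1` with
`(1/c)·I_m(u,g) ≤ ‖u^{(m+1)/2} − g^{(m+1)/2}‖² ≤ c·I_m(u,g)` for all `u, g ∈ ℝ^N`;
in particular `I_m(u,g) ≥ 0`. -/
theorem boundary_term_comparison {N : ℕ} (hN : 1 ≤ N) (m : ℝ) (hm : 0 < m) :
    ∃ c : ℝ, 1 ≤ c ∧ ∀ u g : EuclideanSpace ℝ (Fin N),
      (1 / c) * Ifun m u g ≤ ‖vpow ((m + 1) / 2) u - vpow ((m + 1) / 2) g‖ ^ 2 ∧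
      ‖vpow ((m + 1) / 2) u - vpow ((m + 1) / 2) g‖ ^ 2 ≤ c * Ifun m u g ∧
      0 ≤ Ifun m u g :=
  boundary_term_comparison_general m hm

end
end

section
/- For every m > 1 there exists a constant c = c(m) > 0 such that for all u, g ∈ ℝ^N: I_m(u,g) ≤ c · ‖u^m − g^m‖^{(1+m)/m}. -/
/-!
`I_m(u, g)` is the Bregman distance of `F x = ‖x‖^(m+1) / (m+1)`, whose gradient is `x^m`.
Convexity of `F` (Young's inequality) bounds it by `⟪u^m - g^m, u - g⟫ ≤ ‖u^m - g^m‖ ‖u - g‖`.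
For `m ≥ 1` the map `x ↦ x^m` is monotone of degree `m + 1`:
`⟪u^m - g^m, u - g⟫ ≥ (‖u - g‖ / 2)^m ‖u - g‖`, so `‖u - g‖ ≤ 2 ‖u^m - g^m‖^(1/m)`,
and the claim holds with `c = 2`.
-/

open scoped RealInnerProductSpace

noncomputable section

open Real

theorem rpow_mul_le_young {a b m : ℝ} (ha : 0 ≤ a) (hb : 0 ≤ b) (hm : 0 < m) :
    a ^ m * b ≤ (m * a ^ (m + 1) + b ^ (m + 1)) / (m + 1) := by
  have hpq : ((m + 1) / m).HolderConjugate (m + 1) := by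
    rw [Real.holderConjugate_iff]
    exact ⟨by rw [lt_div_iff₀ hm]; linarith, by field_simp⟩
  have h := young_inequality_of_nonneg (rpow_nonneg ha m) hb hpq
  rw [← rpow_mul ha, mul_div_cancel₀ _ hm.ne', div_div_eq_mul_div, ← add_div] at h
  rwa [mul_comm m]

theorem half_add_rpow_le_add_rpow {a b p : ℝ} (ha : 0 ≤ a) (hb : 0 ≤ b) (hp : 0 ≤ p) :
    ((a + b) / 2) ^ p ≤ a ^ p + b ^ p := by
  rcases le_total a b with hab | hab
  · calc ((a + b) / 2) ^ p ≤ b ^ p := by gcongr; linarith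
      _ ≤ a ^ p + b ^ p := le_add_of_nonneg_left (rpow_nonneg ha p)
  · calc ((a + b) / 2) ^ p ≤ a ^ p := by gcongr; linarith
      _ ≤ a ^ p + b ^ p := le_add_of_nonneg_right (rpow_nonneg hb p)

section InnerProductSpace

variable {E : Type*} [NormedAddCommGroup E] [InnerProductSpace ℝ E] {m : ℝ}

theorem div_sub_le_inner_rpow_smul (hm : 0 < m) (u g : E) :
    (‖u‖ ^ (m + 1) - ‖g‖ ^ (m + 1)) / (m + 1) ≤ ⟪‖u‖ ^ (m - 1) • u, u - g⟫ := by
  have hu := norm_nonneg u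
  have hpow : ‖u‖ ^ (m - 1) * ‖u‖ = ‖u‖ ^ m := by
    rw [← rpow_add_one' hu (by linarith), sub_add_cancel]
  calc (‖u‖ ^ (m + 1) - ‖g‖ ^ (m + 1)) / (m + 1)
      ≤ ‖u‖ ^ (m + 1) - ‖u‖ ^ m * ‖g‖ := by
        have := rpow_mul_le_young hu (norm_nonneg g) hm
        rw [le_div_iff₀ (by linarith)] at this
        rw [div_le_iff₀ (by linarith)]
        linarith
    _ = ‖u‖ ^ (m - 1) * (‖u‖ * ‖u‖ - ‖u‖ * ‖g‖) := by
        rw [rpow_add_one' hu (by linarith), ← hpow]; ring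
    _ ≤ ‖u‖ ^ (m - 1) * (‖u‖ * ‖u‖ - ⟪u, g⟫) := by
        gcongr; exact real_inner_le_norm u g
    _ = ⟪‖u‖ ^ (m - 1) • u, u - g⟫ := by
        rw [real_inner_smul_left, inner_sub_right, real_inner_self_eq_norm_mul_norm]

theorem mul_norm_sub_sq_le_inner_rpow_smul_sub (hm : 1 ≤ m) (u g : E) :
    (‖u‖ ^ (m - 1) + ‖g‖ ^ (m - 1)) / 2 * ‖u - g‖ ^ 2 ≤
      ⟪‖u‖ ^ (m - 1) • u - ‖g‖ ^ (m - 1) • g, u - g⟫ := by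
  have hm' : 0 ≤ m - 1 := by linarith
  -- the excess over the left-hand side is `(‖u‖^(m-1) - ‖g‖^(m-1)) (‖u‖² - ‖g‖²) / 2`
  have hmono : 0 ≤ (‖u‖ ^ (m - 1) - ‖g‖ ^ (m - 1)) * (‖u‖ ^ 2 - ‖g‖ ^ 2) := by
    rcases le_total ‖u‖ ‖g‖ with h | h
    · exact mul_nonneg_of_nonpos_of_nonpos (sub_nonpos.2 (by gcongr)) (sub_nonpos.2 (by gcongr))
    · exact mul_nonneg (sub_nonneg.2 (by gcongr)) (sub_nonneg.2 (by gcongr))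
  rw [norm_sub_sq_real]
  simp only [inner_sub_left, inner_sub_right, real_inner_smul_left, real_inner_self_eq_norm_sq,
    real_inner_comm g u]
  linarith

theorem half_norm_sub_rpow_mul_norm_sub_le_inner (hm : 1 ≤ m) (u g : E) :
    (‖u - g‖ / 2) ^ m * ‖u - g‖ ≤ ⟪‖u‖ ^ (m - 1) • u - ‖g‖ ^ (m - 1) • g, u - g⟫ := by
  have hm' : 0 ≤ m - 1 := by linarith
  calc (‖u - g‖ / 2) ^ m * ‖u - g‖ = (‖u - g‖ / 2) ^ (m - 1) * ‖u - g‖ ^ 2 / 2 := by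
        rw [← sub_add_cancel m 1, rpow_add_one' (by positivity) (by linarith), add_sub_cancel_right]
        ring
    _ ≤ ((‖u‖ + ‖g‖) / 2) ^ (m - 1) * ‖u - g‖ ^ 2 / 2 := by gcongr; exact norm_sub_le u g
    _ ≤ (‖u‖ ^ (m - 1) + ‖g‖ ^ (m - 1)) * ‖u - g‖ ^ 2 / 2 := by
        gcongr; exact half_add_rpow_le_add_rpow (norm_nonneg u) (norm_nonneg g) hm'
    _ = (‖u‖ ^ (m - 1) + ‖g‖ ^ (m - 1)) / 2 * ‖u - g‖ ^ 2 := by ring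
    _ ≤ _ := mul_norm_sub_sq_le_inner_rpow_smul_sub hm u g

theorem norm_sub_le_two_mul_norm_rpow_smul_sub_rpow_inv (hm : 1 ≤ m) (u g : E) :
    ‖u - g‖ ≤ 2 * ‖‖u‖ ^ (m - 1) • u - ‖g‖ ^ (m - 1) • g‖ ^ m⁻¹ := by
  rcases (norm_nonneg (u - g)).eq_or_lt with h | h
  · rw [← h]; positivity
  have hpow : (‖u - g‖ / 2) ^ m ≤ ‖‖u‖ ^ (m - 1) • u - ‖g‖ ^ (m - 1) • g‖ :=
    le_of_mul_le_mul_right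
      ((half_norm_sub_rpow_mul_norm_sub_le_inner hm u g).trans (real_inner_le_norm _ _)) h
  have := (le_rpow_inv_iff_of_pos (by positivity) (norm_nonneg _) (by linarith)).2 hpow
  linarith

end InnerProductSpace

theorem boundary_term_le_degenerate_general {N : ℕ} (m : ℝ) (hm : 1 < m) :
    ∃ c : ℝ, 0 < c ∧ ∀ u g : EuclideanSpace ℝ (Fin N),
      Ifun m u g ≤ c * ‖vpow m u - vpow m g‖ ^ ((1 + m) / m) := by
  refine ⟨2, two_pos, fun u g => ?_⟩
  set d := vpow m u - vpow m g
  have hI : Ifun m u g ≤ ⟪d, u - g⟫ := by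
    have := div_sub_le_inner_rpow_smul (by linarith) u g
    simp only [Ifun, d, vpow]
    rw [one_div_mul_eq_div, inner_sub_left]
    linarith
  have hexp : (1 + m) / m = 1 + m⁻¹ := by field_simp; ring
  calc Ifun m u g ≤ ‖d‖ * ‖u - g‖ := hI.trans (real_inner_le_norm _ _)
    _ ≤ ‖d‖ * (2 * ‖d‖ ^ m⁻¹) := by
        gcongr; exact norm_sub_le_two_mul_norm_rpow_smul_sub_rpow_inv hm.le u g
    _ = 2 * ‖d‖ ^ ((1 + m) / m) := by
        rw [hexp, rpow_one_add' (norm_nonneg _) (by positivity)]; ring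

/-- For every `m > 1` there is `c = c(m) > 0` such that for all `u, g ∈ ℝ^N`:
`I_m(u,g) ≤ c·‖u^m − g^m‖^((1+m)/m)`. -/
theorem boundary_term_le_degenerate {N : ℕ} (hN : 1 ≤ N) (m : ℝ) (hm : 1 < m) :
    ∃ c : ℝ, 0 < c ∧ ∀ u g : EuclideanSpace ℝ (Fin N),
      Ifun m u g ≤ c * ‖vpow m u - vpow m g‖ ^ ((1 + m) / m) :=
  boundary_term_le_degenerate_general m hm

end
end

section
/- For every 0 < m < 1 there exists a constant c = c(m) > 0 such that for all u, w ∈ ℝ^N: ‖w − u‖^{m+1} ≤ c · (‖w‖ + ‖u‖)^{(1−m)(1+m)/2} · ‖w^{(m+1)/2} − u^{(m+1)/2}‖^{m+1}. -/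
/-! Write `x = ‖x‖ • e` and `y = ‖y‖ • f` with unit vectors `e, f`; the signed power `x^p` is then
`‖x‖ ^ p • e`. For unit vectors, `‖α • e - β • f‖²` is a convex combination of `(α - β)²` and
`(α + β)²` with weights `(1 ± ⟪e, f⟫) / 2` that do not depend on `α, β`. Hence
`p ‖x - y‖ ≤ (‖x‖ + ‖y‖) ^ (1 - p) ‖x^p - y^p‖` for `0 < p ≤ 1` reduces to the two scalar
inequalities `p |a - b| ≤ (a + b) ^ (1 - p) |a^p - b^p|` (concavity of `t ↦ t ^ p`, through
Bernoulli's inequality) and `p (a + b) ≤ (a + b) ^ (1 - p) (a^p + b^p)` (subadditivity of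
`t ↦ t ^ p`). The theorem is this with `p = (m + 1) / 2`, raised to the power `m + 1`. -/

noncomputable section

open Real

section Scalar

variable {p a b : ℝ}

lemma mul_sub_le_rpow_one_sub_mul_rpow_sub_rpow (hp0 : 0 ≤ p) (hp1 : p ≤ 1) (hb : 0 ≤ b)
    (hba : b ≤ a) : p * (a - b) ≤ a ^ (1 - p) * (a ^ p - b ^ p) := by
  rcases (hb.trans hba).eq_or_lt with rfl | ha
  · simp [le_antisymm hba hb]
  have hbern : (b / a) ^ p ≤ 1 + p * (b / a - 1) := by
    simpa using rpow_one_add_le_one_add_mul_self (s := b / a - 1)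
      (by linarith [div_nonneg hb ha.le]) hp0 hp1
  have hsplit : a ^ (1 - p) * a ^ p = a := by
    rw [← rpow_add ha, sub_add_cancel, rpow_one]
  rw [div_rpow hb ha.le] at hbern
  have hpow : a ^ (1 - p) * b ^ p ≤ a - p * (a - b) := by
    calc a ^ (1 - p) * b ^ p = a ^ (1 - p) * a ^ p * (b ^ p / a ^ p) := by field_simp
      _ ≤ a * (1 + p * (b / a - 1)) := by
        rw [hsplit]; exact mul_le_mul_of_nonneg_left hbern ha.le
      _ = a - p * (a - b) := by field_simp; ring
  linarith [hsplit]

lemma mul_abs_sub_le_add_rpow_mul_abs_rpow_sub_rpow (hp0 : 0 ≤ p) (hp1 : p ≤ 1) (ha : 0 ≤ a)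
    (hb : 0 ≤ b) : p * |a - b| ≤ (a + b) ^ (1 - p) * |a ^ p - b ^ p| := by
  wlog hba : b ≤ a generalizing a b
  · simpa [abs_sub_comm, add_comm] using this hb ha (le_of_not_ge hba)
  rw [abs_of_nonneg (sub_nonneg.2 hba),
    abs_of_nonneg (sub_nonneg.2 (rpow_le_rpow hb hba hp0))]
  calc p * (a - b) ≤ a ^ (1 - p) * (a ^ p - b ^ p) :=
        mul_sub_le_rpow_one_sub_mul_rpow_sub_rpow hp0 hp1 hb hba
    _ ≤ (a + b) ^ (1 - p) * (a ^ p - b ^ p) := by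
        gcongr
        · exact sub_nonneg.2 (rpow_le_rpow hb hba hp0)
        · linarith

lemma mul_add_le_add_rpow_mul_rpow_add_rpow (hp0 : 0 ≤ p) (hp1 : p ≤ 1) (ha : 0 ≤ a)
    (hb : 0 ≤ b) : p * (a + b) ≤ (a + b) ^ (1 - p) * (a ^ p + b ^ p) := by
  have hab : 0 ≤ a + b := add_nonneg ha hb
  calc p * (a + b) ≤ a + b := mul_le_of_le_one_left hab hp1
    _ = (a + b) ^ (1 - p) * (a + b) ^ p := by
        rw [← rpow_add' hab (by simp), sub_add_cancel, rpow_one]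
    _ ≤ (a + b) ^ (1 - p) * (a ^ p + b ^ p) := by
        gcongr; exact rpow_add_le_add_rpow ha hb hp0 hp1

end Scalar

section InnerProductSpace

variable {E : Type*} [NormedAddCommGroup E] [InnerProductSpace ℝ E] {e f : E}

lemma norm_smul_sub_smul_sq (he : ‖e‖ = 1) (hf : ‖f‖ = 1) (α β : ℝ) :
    ‖α • e - β • f‖ ^ 2 =
      (1 + inner ℝ e f) / 2 * (α - β) ^ 2 + (1 - inner ℝ e f) / 2 * (α + β) ^ 2 := by
  rw [norm_sub_sq_real, norm_smul, norm_smul, real_inner_smul_left, real_inner_smul_right, he, hf,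
    mul_one, mul_one, Real.norm_eq_abs, Real.norm_eq_abs, sq_abs, sq_abs]
  ring

lemma mul_norm_smul_sub_smul_le (he : ‖e‖ = 1) (hf : ‖f‖ = 1) {α β α' β' c K : ℝ} (hc : 0 ≤ c)
    (hK : 0 ≤ K) (hsub : c * |α - β| ≤ K * |α' - β'|) (hadd : c * |α + β| ≤ K * |α' + β'|) :
    c * ‖α • e - β • f‖ ≤ K * ‖α' • e - β' • f‖ := by
  have hinner : |inner ℝ e f| ≤ 1 := by simpa [he, hf] using abs_real_inner_le_norm e f
  have hsub2 : c ^ 2 * (α - β) ^ 2 ≤ K ^ 2 * (α' - β') ^ 2 := by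
    simpa [mul_pow, sq_abs] using pow_le_pow_left₀ (by positivity) hsub 2
  have hadd2 : c ^ 2 * (α + β) ^ 2 ≤ K ^ 2 * (α' + β') ^ 2 := by
    simpa [mul_pow, sq_abs] using pow_le_pow_left₀ (by positivity) hadd 2
  have hw₁ : 0 ≤ (1 + inner ℝ e f) / 2 := by linarith [neg_abs_le (inner ℝ e f)]
  have hw₂ : 0 ≤ (1 - inner ℝ e f) / 2 := by linarith [le_abs_self (inner ℝ e f)]
  rw [← sq_le_sq₀ (by positivity) (by positivity), mul_pow, mul_pow,
    norm_smul_sub_smul_sq he hf, norm_smul_sub_smul_sq he hf]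
  linarith [mul_le_mul_of_nonneg_left hsub2 hw₁, mul_le_mul_of_nonneg_left hadd2 hw₂]

lemma mul_norm_smul_sub_smul_le_rpow (he : ‖e‖ = 1) (hf : ‖f‖ = 1) {p a b : ℝ} (hp0 : 0 ≤ p)
    (hp1 : p ≤ 1) (ha : 0 ≤ a) (hb : 0 ≤ b) :
    p * ‖a • e - b • f‖ ≤ (a + b) ^ (1 - p) * ‖a ^ p • e - b ^ p • f‖ := by
  refine mul_norm_smul_sub_smul_le he hf hp0 (by positivity)
    (mul_abs_sub_le_add_rpow_mul_abs_rpow_sub_rpow hp0 hp1 ha hb) ?_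
  rw [abs_of_nonneg (add_nonneg ha hb), abs_of_nonneg (by positivity)]
  exact mul_add_le_add_rpow_mul_rpow_add_rpow hp0 hp1 ha hb

lemma exists_norm_eq_one_smul_eq [Nontrivial E] (x : E) : ∃ e : E, ‖e‖ = 1 ∧ ‖x‖ • e = x := by
  rcases eq_or_ne x 0 with rfl | hx
  · obtain ⟨e, he⟩ := exists_norm_eq E zero_le_one
    exact ⟨e, he, by simp⟩
  · exact ⟨‖x‖⁻¹ • x, norm_smul_inv_norm hx, smul_inv_smul₀ (norm_ne_zero_iff.2 hx) x⟩

theorem mul_norm_sub_le_rpow_mul_norm_rpow_smul_sub {p : ℝ} (hp0 : 0 < p) (hp1 : p ≤ 1)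
    (x y : E) :
    p * ‖x - y‖ ≤ (‖x‖ + ‖y‖) ^ (1 - p) * ‖‖x‖ ^ (p - 1) • x - ‖y‖ ^ (p - 1) • y‖ := by
  by_cases hxy : x = 0 ∧ y = 0
  · simp [hxy.1, hxy.2]
  have : Nontrivial E := by
    by_cases hx : x = 0
    exacts [nontrivial_of_ne y 0 (hxy <| ⟨hx, ·⟩), nontrivial_of_ne x 0 hx]
  obtain ⟨e, he, hxe⟩ := exists_norm_eq_one_smul_eq x
  obtain ⟨f, hf, hyf⟩ := exists_norm_eq_one_smul_eq y
  have hpow (z g : E) (hzg : ‖z‖ • g = z) : ‖z‖ ^ p • g = ‖z‖ ^ (p - 1) • z := by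
    calc ‖z‖ ^ p • g = ‖z‖ ^ (p - 1) • ‖z‖ • g := by
          rw [smul_smul, ← rpow_add_one' (y := p - 1) (norm_nonneg z) (by simpa using hp0.ne'),
            sub_add_cancel]
      _ = ‖z‖ ^ (p - 1) • z := by rw [hzg]
  have key := mul_norm_smul_sub_smul_le_rpow he hf hp0.le hp1 (norm_nonneg x) (norm_nonneg y)
  rwa [hxe, hyf, hpow x e hxe, hpow y f hyf] at key

end InnerProductSpace

theorem norm_sub_pow_le_singular_general {N : ℕ} (m : ℝ) (hm0 : 0 < m) (hm1 : m < 1) :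
    ∃ c : ℝ, 0 < c ∧ ∀ u w : EuclideanSpace ℝ (Fin N),
      ‖w - u‖ ^ (m + 1) ≤
        c * (‖w‖ + ‖u‖) ^ ((1 - m) * (1 + m) / 2) *
          ‖vpow ((m + 1) / 2) w - vpow ((m + 1) / 2) u‖ ^ (m + 1) := by
  set p : ℝ := (m + 1) / 2
  have hp0 : 0 < p := by positivity
  refine ⟨p⁻¹ ^ (m + 1), by positivity, fun u w => ?_⟩
  have hlin : ‖w - u‖ ≤ p⁻¹ * ((‖w‖ + ‖u‖) ^ (1 - p) * ‖vpow p w - vpow p u‖) :=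
    (le_inv_mul_iff₀ hp0).2 <|
      mul_norm_sub_le_rpow_mul_norm_rpow_smul_sub hp0 (by dsimp only [p]; linarith) w u
  calc ‖w - u‖ ^ (m + 1)
      ≤ (p⁻¹ * ((‖w‖ + ‖u‖) ^ (1 - p) * ‖vpow p w - vpow p u‖)) ^ (m + 1) :=
        rpow_le_rpow (norm_nonneg _) hlin (by linarith)
    _ = p⁻¹ ^ (m + 1) * (‖w‖ + ‖u‖) ^ ((1 - p) * (m + 1)) * ‖vpow p w - vpow p u‖ ^ (m + 1) := by
        rw [mul_rpow (by positivity) (by positivity), mul_rpow (by positivity) (by positivity),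
          ← rpow_mul (by positivity), mul_assoc]
    _ = p⁻¹ ^ (m + 1) * (‖w‖ + ‖u‖) ^ ((1 - m) * (1 + m) / 2) *
          ‖vpow p w - vpow p u‖ ^ (m + 1) := by
        congr 3; ring

/-- For every `0 < m < 1` there is `c = c(m) > 0` such that for all `u, w ∈ ℝ^N`:
`‖w − u‖^{m+1} ≤ c·(‖w‖ + ‖u‖)^{(1−m)(1+m)/2}·‖w^{(m+1)/2} − u^{(m+1)/2}‖^{m+1}`. -/
theorem norm_sub_pow_le_singular {N : ℕ} (hN : 1 ≤ N) (m : ℝ) (hm0 : 0 < m) (hm1 : m < 1) :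
    ∃ c : ℝ, 0 < c ∧ ∀ u w : EuclideanSpace ℝ (Fin N),
      ‖w - u‖ ^ (m + 1) ≤
        c * (‖w‖ + ‖u‖) ^ ((1 - m) * (1 + m) / 2) *
          ‖vpow ((m + 1) / 2) w - vpow ((m + 1) / 2) u‖ ^ (m + 1) :=
  norm_sub_pow_le_singular_general m hm0 hm1

end
end

section
/- Let E be a real Banach space, v : ℝ → E continuously differentiable, a ∈ ℝ and h > 0. Define f(t) := e^{−(t−a)/h} v(a) + (1/h) ∫_a^t e^{(s−t)/h} v(s) ds. Then for every t > a, f is differentiable at t with derivative f'(t) = (1/h) ∫_a^t e^{(s−t)/h} v'(s) ds; equivalently, the time derivative of this initial-value mollification equals the mollification (with the same formula and without initial term) of the time derivative of v. -/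
/-!
Writing the kernel as `e^{(s-t)/h} = e^{-t/h} e^{s/h}` and differentiating the product shows that
`g(t) := (1/h) ∫_a^t e^{(s-t)/h} v(s) ds` solves `g' = (v - g)/h`, and the initial term
`e^{-(t-a)/h} v(a)` solves the homogeneous equation, so `f' = (v - f)/h`. Integration by parts
against the kernel turns `(1/h) ∫_a^t e^{(s-t)/h} v'(s) ds` into the same expression
`(v(t) - f(t))/h`.
-/

noncomputable section

open intervalIntegral

section ExpMollifier

variable {E : Type*} [NormedAddCommGroup E] [NormedSpace ℝ E]

/-- The mollification `⟦v⟧_h` without its initial term `e^{-(t-a)/h} v(a)`. -/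
def expMollifier (h a : ℝ) (v : ℝ → E) (t : ℝ) : E :=
  (1 / h) • ∫ s in a..t, Real.exp ((s - t) / h) • v s

theorem expMollifier_eq_smul_integral (h a : ℝ) (v : ℝ → E) (t : ℝ) :
    expMollifier h a v t = ((1 / h) * Real.exp (-t / h)) • ∫ s in a..t, Real.exp (s / h) • v s := by
  rw [expMollifier, mul_smul, ← integral_smul (Real.exp (-t / h))]
  congr 1
  refine intervalIntegral.integral_congr fun s _ => ?_
  rw [smul_smul, ← Real.exp_add]
  ring_nf

theorem hasDerivAt_exp_sub_div (c h s : ℝ) :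
    HasDerivAt (fun x => Real.exp ((x - c) / h)) (Real.exp ((s - c) / h) * (1 / h)) s :=
  (((hasDerivAt_id s).sub_const c).div_const h).exp

theorem hasDerivAt_expMollifier [CompleteSpace E] {v : ℝ → E} (hv : Continuous v) (h a t : ℝ) :
    HasDerivAt (expMollifier h a v) ((1 / h) • (v t - expMollifier h a v t)) t := by
  have hkernel : HasDerivAt (fun u => (1 / h) * Real.exp (-u / h))
      ((1 / h) * (Real.exp (-t / h) * (-1 / h))) t :=
    (((hasDerivAt_id t).neg.div_const h).exp).const_mul (1 / h)
  have hprimitive : HasDerivAt (fun u => ∫ s in a..u, Real.exp (s / h) • v s)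
      (Real.exp (t / h) • v t) t :=
    ((Real.continuous_exp.comp (continuous_id.div_const h)).smul hv).integral_hasStrictDerivAt
      a t |>.hasDerivAt
  have hcancel : Real.exp (-t / h) * Real.exp (t / h) = 1 := by
    rw [← Real.exp_add, neg_div, neg_add_cancel, Real.exp_zero]
  convert hkernel.smul hprimitive using 1
  · exact funext (expMollifier_eq_smul_integral h a v)
  · rw [expMollifier_eq_smul_integral, smul_smul, mul_assoc, hcancel]
    module

theorem expMollifier_of_hasDerivAt [CompleteSpace E] {v v' : ℝ → E}
    (hv : ∀ s, HasDerivAt v (v' s) s) (hv' : Continuous v') (h a t : ℝ) :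
    expMollifier h a v' t =
      (1 / h) • (v t - Real.exp (-(t - a) / h) • v a - expMollifier h a v t) := by
  have hvc : Continuous v := continuous_iff_continuousAt.2 fun s => (hv s).continuousAt
  have hexp : Continuous fun s => Real.exp ((s - t) / h) := by fun_prop
  have hparts := integral_smul_deriv_eq_deriv_smul (fun s _ => hasDerivAt_exp_sub_div t h s)
    (fun s _ => hv s) ((hexp.mul continuous_const).intervalIntegrable a t)
    (hv'.intervalIntegrable a t)
  have hkernel : (∫ s in a..t, (Real.exp ((s - t) / h) * (1 / h)) • v s) =
      (1 / h) • ∫ s in a..t, Real.exp ((s - t) / h) • v s := by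
    simp_rw [mul_comm _ (1 / h), mul_smul, integral_smul]
  rw [expMollifier, hparts, hkernel, sub_self, zero_div, Real.exp_zero, one_smul, ← neg_sub t a,
    neg_div]
  rfl

end ExpMollifier

theorem hasDerivAt_expMollification_initialValue_general {E : Type*} [NormedAddCommGroup E]
    [NormedSpace ℝ E] [CompleteSpace E] (v v' : ℝ → E)
    (hv : ∀ t, HasDerivAt v (v' t) t) (hv' : Continuous v')
    (a h : ℝ)
    (f : ℝ → E)
    (hf : ∀ t, f t = Real.exp (-(t - a) / h) • v a +
      (1 / h) • ∫ s in a..t, Real.exp ((s - t) / h) • v s)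
    (t : ℝ) :
    HasDerivAt f ((1 / h) • ∫ s in a..t, Real.exp ((s - t) / h) • v' s) t := by
  have hvc : Continuous v := continuous_iff_continuousAt.2 fun s => (hv s).continuousAt
  have hinitial : HasDerivAt (fun u => Real.exp (-(u - a) / h))
      (Real.exp (-(t - a) / h) * (-1 / h)) t :=
    (((hasDerivAt_id t).sub_const a).neg.div_const h).exp
  have hf' : f = fun u => Real.exp (-(u - a) / h) • v a + expMollifier h a v u := funext hf
  change HasDerivAt f (expMollifier h a v' t) t
  rw [hf', expMollifier_of_hasDerivAt hv hv' h a t]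
  convert (hinitial.smul_const (v a)).add (hasDerivAt_expMollifier hvc h a t) using 1
  · rfl
  · module

/-- Let `E` be a real Banach space, `v : ℝ → E` continuously differentiable (with derivative
`v'`), `a ∈ ℝ`, `h > 0`, and let
`f(t) := e^{−(t−a)/h} v(a) + (1/h) ∫_a^t e^{(s−t)/h} v(s) ds` be the exponential time
mollification with initial value `v(a)`. Then for every `t > a`, `f` is differentiable at `t`
with `f'(t) = (1/h) ∫_a^t e^{(s−t)/h} v'(s) ds`, i.e. the time derivative of the mollification
is the (plain) mollification of the time derivative. -/
theorem hasDerivAt_expMollification_initialValue {E : Type*} [NormedAddCommGroup E]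
    [NormedSpace ℝ E] [CompleteSpace E] (v v' : ℝ → E)
    (hv : ∀ t, HasDerivAt v (v' t) t) (hv' : Continuous v')
    (a h : ℝ) (hh : 0 < h)
    (f : ℝ → E)
    (hf : ∀ t, f t = Real.exp (-(t - a) / h) • v a +
      (1 / h) • ∫ s in a..t, Real.exp ((s - t) / h) • v s)
    (t : ℝ) (ht : a < t) :
    HasDerivAt f ((1 / h) • ∫ s in a..t, Real.exp ((s - t) / h) • v' s) t :=
  hasDerivAt_expMollification_initialValue_general v v' hv hv' a h f hf t

end
end

section
/- Let T > 0, h > 0, p ∈ [1, ∞), and let v : ℝ → ℝ^N be measurable with ∫_0^T ‖v(t)‖^p dt < ∞. Define ⟦v⟧_h(t) := (1/h) ∫_0^t e^{(s−t)/h} v(s) ds for t ∈ (0,T). Then ∫_0^T ‖⟦v⟧_h(t)‖^p dt ≤ ∫_0^T ‖v(t)‖^p dt; i.e. the exponential time mollification is a contraction on L^p((0,T), ℝ^N). -/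
/-!
For `s ≤ t` the weight `(1/h) e^{(s-t)/h}` is the exponential density with rate `1/h`
evaluated at `t - s`, so `‖⟦v⟧_h(t)‖ ≤ ∫ k(t - s) ‖v(s)‖ ds` with a kernel `k` of total mass one
in `s` for fixed `t` and in `t` for fixed `s`. Jensen's inequality for the sub-probability
measure `k(t - s) ds` gives `‖⟦v⟧_h(t)‖^p ≤ ∫ k(t - s) ‖v(s)‖^p ds`; integrating in `t` and
exchanging the integrals (Schur's test) yields the contraction.
-/

open MeasureTheory ProbabilityTheory
open scoped ENNReal

lemma rpow_lintegral_mul_le_lintegral_mul_rpow {α : Type*} [MeasurableSpace α] {μ : Measure α}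
    {w f : α → ℝ≥0∞} (hw : AEMeasurable w μ) (hf : AEMeasurable f μ)
    (hw_le : ∫⁻ a, w a ∂μ ≤ 1) {p : ℝ} (hp : 1 ≤ p) :
    (∫⁻ a, w a * f a ∂μ) ^ p ≤ ∫⁻ a, w a * f a ^ p ∂μ := by
  have hp₀ : 0 < p := zero_lt_one.trans_le hp
  have hp_inv : 0 ≤ 1 / p := by positivity
  have hq : 0 ≤ 1 - 1 / p := sub_nonneg.2 ((div_le_one hp₀).2 hp)
  -- Hölder with exponents `p` and `p / (p - 1)`, splitting `w f = (w f ^ p) ^ (1/p) w ^ (1 - 1/p)`.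
  have holder : ∫⁻ a, w a * f a ∂μ ≤ (∫⁻ a, w a * f a ^ p ∂μ) ^ (1 / p) := calc
    ∫⁻ a, w a * f a ∂μ = ∫⁻ a, (w a * f a ^ p) ^ (1 / p) * w a ^ (1 - 1 / p) ∂μ := by
        refine lintegral_congr fun a => ?_
        rw [ENNReal.mul_rpow_of_nonneg _ _ hp_inv, ← ENNReal.rpow_mul, mul_one_div_cancel hp₀.ne',
          ENNReal.rpow_one, mul_right_comm, ← ENNReal.rpow_add_of_nonneg _ _ hp_inv hq,
          add_sub_cancel, ENNReal.rpow_one]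
    _ ≤ (∫⁻ a, w a * f a ^ p ∂μ) ^ (1 / p) * (∫⁻ a, w a ∂μ) ^ (1 - 1 / p) :=
        ENNReal.lintegral_mul_norm_pow_le (hw.mul (hf.pow_const p)) hw hp_inv hq (by ring)
    _ ≤ (∫⁻ a, w a * f a ^ p ∂μ) ^ (1 / p) := by
        grw [ENNReal.rpow_le_one hw_le hq, mul_one]
  calc (∫⁻ a, w a * f a ∂μ) ^ p ≤ ((∫⁻ a, w a * f a ^ p ∂μ) ^ (1 / p)) ^ p := by gcongr
    _ = ∫⁻ a, w a * f a ^ p ∂μ := by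
        rw [← ENNReal.rpow_mul, one_div_mul_cancel hp₀.ne', ENNReal.rpow_one]

lemma lintegral_rpow_lintegral_mul_le {α β : Type*} [MeasurableSpace α] [MeasurableSpace β]
    {μ : Measure α} {ν : Measure β} [SFinite μ] [SFinite ν] {K : α → β → ℝ≥0∞}
    (hK : Measurable (Function.uncurry K)) (hK_row : ∀ a, ∫⁻ b, K a b ∂ν ≤ 1)
    (hK_col : ∀ b, ∫⁻ a, K a b ∂μ ≤ 1) {f : β → ℝ≥0∞} (hf : Measurable f) {p : ℝ}
    (hp : 1 ≤ p) :
    ∫⁻ a, (∫⁻ b, K a b * f b ∂ν) ^ p ∂μ ≤ ∫⁻ b, f b ^ p ∂ν := calc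
  ∫⁻ a, (∫⁻ b, K a b * f b ∂ν) ^ p ∂μ ≤ ∫⁻ a, ∫⁻ b, K a b * f b ^ p ∂ν ∂μ :=
      lintegral_mono fun a => rpow_lintegral_mul_le_lintegral_mul_rpow
        (hK.of_uncurry_left.aemeasurable) hf.aemeasurable (hK_row a) hp
  _ = ∫⁻ b, ∫⁻ a, K a b * f b ^ p ∂μ ∂ν :=
      lintegral_lintegral_swap (hK.mul ((hf.pow_const p).comp measurable_snd)).aemeasurable
  _ = ∫⁻ b, (∫⁻ a, K a b ∂μ) * f b ^ p ∂ν :=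
      lintegral_congr fun _ => lintegral_mul_const _ hK.of_uncurry_right
  _ ≤ ∫⁻ b, f b ^ p ∂ν := lintegral_mono fun b => mul_le_of_le_one_left' (hK_col b)

lemma lintegral_exponentialPDF_sub_left {r : ℝ} (hr : 0 < r) (t : ℝ) :
    ∫⁻ s, exponentialPDF r (t - s) = 1 := by
  rw [lintegral_sub_left_eq_self (exponentialPDF r) t, lintegral_exponentialPDF_eq_one hr]

lemma lintegral_exponentialPDF_sub_right {r : ℝ} (hr : 0 < r) (s : ℝ) :
    ∫⁻ t, exponentialPDF r (t - s) = 1 := by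
  rw [lintegral_sub_right_eq_self (exponentialPDF r) s, lintegral_exponentialPDF_eq_one hr]

lemma measurable_exponentialPDF_sub (r : ℝ) :
    Measurable (Function.uncurry fun t s : ℝ => exponentialPDF r (t - s)) :=
  ((measurable_exponentialPDFReal r).comp (measurable_fst.sub measurable_snd)).ennreal_ofReal

lemma enorm_rpow_norm {E : Type*} [NormedAddCommGroup E] {p : ℝ} (hp : 0 ≤ p) (x : E) :
    ‖‖x‖ ^ p‖ₑ = ‖x‖ₑ ^ p := by
  rw [Real.enorm_of_nonneg (by positivity), ← ENNReal.ofReal_rpow_of_nonneg (norm_nonneg x) hp,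
    ofReal_norm]

lemma integral_norm_rpow_le_of_lintegral_le {α E F : Type*} [MeasurableSpace α] {μ : Measure α}
    [NormedAddCommGroup E] [NormedAddCommGroup F] {f : α → E} {g : α → F} {p : ℝ} (hp : 0 ≤ p)
    (hg : Integrable (fun a => ‖g a‖ ^ p) μ)
    (hfg : ∫⁻ a, ‖f a‖ₑ ^ p ∂μ ≤ ∫⁻ a, ‖g a‖ₑ ^ p ∂μ) :
    ∫ a, ‖f a‖ ^ p ∂μ ≤ ∫ a, ‖g a‖ ^ p ∂μ := by
  have hg_fin : ∫⁻ a, ‖g a‖ₑ ^ p ∂μ ≠ ∞ := by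
    simpa only [enorm_rpow_norm hp] using hg.2.ne
  calc ∫ a, ‖f a‖ ^ p ∂μ ≤ (∫⁻ a, ENNReal.ofReal ‖‖f a‖ ^ p‖ ∂μ).toReal :=
        (Real.le_norm_self _).trans (norm_integral_le_lintegral_norm _)
    _ ≤ (∫⁻ a, ‖g a‖ₑ ^ p ∂μ).toReal := by
        simpa only [ofReal_norm, enorm_rpow_norm hp] using ENNReal.toReal_mono hg_fin hfg
    _ = ∫ a, ‖g a‖ ^ p ∂μ := by
        rw [integral_eq_lintegral_of_nonneg_ae (ae_of_all _ fun a => by positivity) hg.1]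
        simp only [← Real.enorm_of_nonneg (Real.rpow_nonneg (norm_nonneg _) _), enorm_rpow_norm hp]

section

variable {E : Type*} [NormedAddCommGroup E] [NormedSpace ℝ E] {h : ℝ}

lemma enorm_smul_exp_smul_eq (hh : 0 < h) {s t : ℝ} (hst : s ≤ t) (x : E) :
    ‖(1 / h) • Real.exp ((s - t) / h) • x‖ₑ = exponentialPDF h⁻¹ (t - s) * ‖x‖ₑ := by
  rw [smul_smul, enorm_smul, Real.enorm_of_nonneg (by positivity),
    exponentialPDF_of_nonneg (sub_nonneg.2 hst)]
  congr 2
  ring_nf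

lemma enorm_expMollification_le (hh : 0 < h) (v : ℝ → E) {t T : ℝ} (ht₀ : 0 ≤ t)
    (htT : t ≤ T) :
    ‖(1 / h) • ∫ s in (0:ℝ)..t, Real.exp ((s - t) / h) • v s‖ₑ ≤
      ∫⁻ s in Set.Ioc 0 T, exponentialPDF h⁻¹ (t - s) * ‖v s‖ₑ := calc
  _ = ‖∫ s in Set.Ioc 0 t, (1 / h) • Real.exp ((s - t) / h) • v s‖ₑ := by
      rw [intervalIntegral.integral_of_le ht₀, integral_smul]
  _ ≤ ∫⁻ s in Set.Ioc 0 t, ‖(1 / h) • Real.exp ((s - t) / h) • v s‖ₑ :=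
      enorm_integral_le_lintegral_enorm _
  _ = ∫⁻ s in Set.Ioc 0 t, exponentialPDF h⁻¹ (t - s) * ‖v s‖ₑ :=
      setLIntegral_congr_fun measurableSet_Ioc fun s hs => enorm_smul_exp_smul_eq hh hs.2 _
  _ ≤ ∫⁻ s in Set.Ioc 0 T, exponentialPDF h⁻¹ (t - s) * ‖v s‖ₑ :=
      lintegral_mono_set (Set.Ioc_subset_Ioc_right htT)

end

/-- The exponential time mollification `⟦v⟧_h(t) := (1/h) ∫_0^t e^{(s−t)/h} v(s) ds` is an
`L^p`-contraction on `(0,T)`: `∫_0^T ‖⟦v⟧_h‖^p ≤ ∫_0^T ‖v‖^p` for `p ∈ [1, ∞)`, `h > 0`. -/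
theorem expMollification_lp_contraction {N : ℕ} (T h p : ℝ) (hT : 0 < T) (hh : 0 < h)
    (hp : 1 ≤ p) (v : ℝ → EuclideanSpace ℝ (Fin N)) (hv : Measurable v)
    (hvp : IntegrableOn (fun t => ‖v t‖ ^ p) (Set.Ioc 0 T)) :
    (∫ t in (0:ℝ)..T, ‖(1 / h) • ∫ s in (0:ℝ)..t, Real.exp ((s - t) / h) • v s‖ ^ p) ≤
      ∫ t in (0:ℝ)..T, ‖v t‖ ^ p := by
  have hr : 0 < h⁻¹ := inv_pos.2 hh
  rw [intervalIntegral.integral_of_le hT.le, intervalIntegral.integral_of_le hT.le]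
  refine integral_norm_rpow_le_of_lintegral_le (zero_le_one.trans hp) hvp ?_
  calc ∫⁻ t in Set.Ioc 0 T, ‖(1 / h) • ∫ s in (0:ℝ)..t, Real.exp ((s - t) / h) • v s‖ₑ ^ p
      ≤ ∫⁻ t in Set.Ioc 0 T,
          (∫⁻ s in Set.Ioc 0 T, exponentialPDF h⁻¹ (t - s) * ‖v s‖ₑ) ^ p :=
        setLIntegral_mono' measurableSet_Ioc fun t ht => by
          gcongr
          exact enorm_expMollification_le hh v ht.1.le ht.2
    _ ≤ ∫⁻ t in Set.Ioc 0 T, ‖v t‖ₑ ^ p :=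
        lintegral_rpow_lintegral_mul_le (measurable_exponentialPDF_sub _)
          (fun t => (setLIntegral_le_lintegral _ _).trans
            (lintegral_exponentialPDF_sub_left hr t).le)
          (fun s => (setLIntegral_le_lintegral _ _).trans
            (lintegral_exponentialPDF_sub_right hr s).le)
          hv.enorm hp
end

section
/- Let T > 0, p ∈ [1, ∞), and let v : ℝ → ℝ^N be measurable with ∫_0^T ‖v(t)‖^p dt < ∞. For h > 0 define ⟦v⟧_h(t) := (1/h) ∫_0^t e^{(s−t)/h} v(s) ds. Then ∫_0^T ‖⟦v⟧_h(t) − v(t)‖^p dt → 0 as h → 0⁺; i.e. the exponential time mollifications converge to v strongly in L^p((0,T), ℝ^N). -/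
/-!
Substituting `s = t - h u` writes the mollification as an average of translates: for
`0 ≤ t ≤ T`, `⟦v⟧_h(t) = ∫ V(t - h u) dν(u)`, where `V` is `v` extended by zero outside `(0, T]`
and `ν` is the exponential distribution of rate one. Jensen's inequality for `ν` and Tonelli bound
`‖⟦v⟧_h - v‖_p^p` by `∫ ‖V(· - h u) - V‖_p^p dν(u)`. The integrand is at most `(2‖V‖_p)^p` and
tends to zero pointwise because translation is continuous on `L^p`, so dominated convergence
finishes the proof.
-/

open MeasureTheory Filter Set ProbabilityTheory
open scoped ENNReal Topology

noncomputable section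

section Translation

variable {G E : Type*} [AddGroup G] [TopologicalSpace G] [IsTopologicalAddGroup G]
  [MeasurableSpace G] [BorelSpace G] {μ : Measure G} [μ.IsAddLeftInvariant]
  [NormedAddCommGroup E] {p : ℝ≥0∞} {f : G → E}

theorem eLpNorm_comp_add_sub_le (hp : 1 ≤ p) (hf : AEStronglyMeasurable f μ) (a : G) :
    eLpNorm (fun x => f (a + x) - f x) p μ ≤ 2 * eLpNorm f p μ := by
  have hmp := measurePreserving_add_left μ a
  calc eLpNorm (fun x => f (a + x) - f x) p μ
      ≤ eLpNorm (f ∘ (a + ·)) p μ + eLpNorm f p μ :=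
        eLpNorm_sub_le (hf.comp_measurePreserving hmp) hf hp
    _ = 2 * eLpNorm f p μ := by rw [eLpNorm_comp_measurePreserving hf hmp, two_mul]

theorem continuous_eLpNorm_comp_add_sub [IsLocallyFiniteMeasure μ] [μ.InnerRegularCompactLTTop]
    [Fact (1 ≤ p)] (hp : p ≠ ∞) (hf : MemLp f p μ) :
    Continuous fun a => eLpNorm (fun x => f (a + x) - f x) p μ := by
  have : Fact (p ≠ ∞) := ⟨hp⟩
  have hcont : Continuous fun a : G => edist (DomAddAct.mk a +ᵥ hf.toLp f) (hf.toLp f) :=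
    ((continuous_id.vadd continuous_const).comp DomAddAct.continuous_mk).edist continuous_const
  simp only [DomAddAct.mk_vadd_toLp, Lp.edist_toLp_toLp] at hcont
  exact hcont

end Translation

section Jensen

variable {α E : Type*} [MeasurableSpace α] {μ : Measure α} [NormedAddCommGroup E] {p : ℝ}

theorem eLpNorm_ofReal_rpow_eq_lintegral (hp : 0 < p) (f : α → E) :
    eLpNorm f (ENNReal.ofReal p) μ ^ p = ∫⁻ a, ‖f a‖ₑ ^ p ∂μ := by
  rw [eLpNorm_eq_eLpNorm' (by simpa using hp) ENNReal.ofReal_ne_top, ENNReal.toReal_ofReal hp.le,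
    lintegral_rpow_enorm_eq_rpow_eLpNorm' hp]

theorem rpow_lintegral_enorm_le_lintegral_enorm_rpow [IsProbabilityMeasure μ] (hp : 1 ≤ p)
    {f : α → E} (hf : AEStronglyMeasurable f μ) :
    (∫⁻ a, ‖f a‖ₑ ∂μ) ^ p ≤ ∫⁻ a, ‖f a‖ₑ ^ p ∂μ := by
  rw [← eLpNorm_one_eq_lintegral_enorm, ← eLpNorm_ofReal_rpow_eq_lintegral (by linarith)]
  gcongr
  exact eLpNorm_le_eLpNorm_of_exponent_le (by simpa using ENNReal.ofReal_le_ofReal hp) hf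

end Jensen

section ApproximateIdentity

variable {E : Type*} [NormedAddCommGroup E] {p : ℝ} {ν : Measure ℝ} [IsProbabilityMeasure ν]
  {V : ℝ → E}

theorem lintegral_rpow_lintegral_enorm_comp_sub_mul_sub_le (hp : 1 ≤ p) (hV : StronglyMeasurable V) (h : ℝ) :
    ∫⁻ t, (∫⁻ u, ‖V (t - h * u) - V t‖ₑ ∂ν) ^ p
      ≤ ∫⁻ u, eLpNorm (fun t => V (-(h * u) + t) - V t) (ENNReal.ofReal p) volume ^ p ∂ν := by
  have hmeas : StronglyMeasurable fun z : ℝ × ℝ => V (z.1 - h * z.2) - V z.1 :=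
    (hV.comp_measurable (by fun_prop)).sub (hV.comp_measurable measurable_fst)
  calc ∫⁻ t, (∫⁻ u, ‖V (t - h * u) - V t‖ₑ ∂ν) ^ p
      ≤ ∫⁻ t, ∫⁻ u, ‖V (t - h * u) - V t‖ₑ ^ p ∂ν :=
        lintegral_mono fun t => rpow_lintegral_enorm_le_lintegral_enorm_rpow hp
          (hmeas.comp_measurable measurable_prodMk_left).aestronglyMeasurable
    _ = ∫⁻ u, (∫⁻ t, ‖V (t - h * u) - V t‖ₑ ^ p) ∂ν :=
        lintegral_lintegral_swap (hmeas.enorm.pow_const p).aemeasurable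
    _ = _ := by
        simp only [eLpNorm_ofReal_rpow_eq_lintegral (zero_lt_one.trans_le hp), neg_add_eq_sub]

theorem tendsto_lintegral_eLpNorm_comp_add_sub_rpow (hp : 1 ≤ p)
    (hV : MemLp V (ENNReal.ofReal p)) :
    Tendsto
      (fun h => ∫⁻ u, eLpNorm (fun t => V (-(h * u) + t) - V t) (ENNReal.ofReal p) volume ^ p ∂ν)
      (𝓝 0) (𝓝 0) := by
  have hp1 : Fact (1 ≤ ENNReal.ofReal p) := ⟨by simpa using ENNReal.ofReal_le_ofReal hp⟩
  have hp0 : 0 < p := zero_lt_one.trans_le hp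
  have hcont := continuous_eLpNorm_comp_add_sub ENNReal.ofReal_ne_top hV
  have hlim : ∀ u, Tendsto (fun h : ℝ =>
      eLpNorm (fun t => V (-(h * u) + t) - V t) (ENNReal.ofReal p) volume ^ p) (𝓝 0) (𝓝 0) := by
    intro u
    have hG := (ENNReal.continuous_rpow_const (y := p)).tendsto _ |>.comp
      ((hcont.comp (continuous_id.mul (continuous_const (y := u))).neg).tendsto (0 : ℝ))
    simp only [Function.comp_def, Pi.neg_apply, Pi.mul_apply, id, zero_mul, neg_zero, zero_add,
      sub_self, eLpNorm_zero', ENNReal.zero_rpow_of_pos hp0] at hG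
    exact hG
  set C := (2 * eLpNorm V (ENNReal.ofReal p) volume) ^ p
  have hC : C ≠ ∞ := by finiteness
  simpa using tendsto_lintegral_filter_of_dominated_convergence (μ := ν) (l := 𝓝 (0 : ℝ))
    (fun _ => C)
    (Eventually.of_forall fun h =>
      (hcont.comp (continuous_const.mul continuous_id).neg).measurable.pow_const p)
    (Eventually.of_forall fun h => ae_of_all _ fun u =>
      ENNReal.rpow_le_rpow (eLpNorm_comp_add_sub_le hp1.out hV.1 _) hp0.le)
    (by simpa using hC) (ae_of_all _ hlim)

theorem tendsto_lintegral_rpow_lintegral_enorm_comp_sub_mul_sub (hp : 1 ≤ p)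
    (hV : StronglyMeasurable V) (hVp : MemLp V (ENNReal.ofReal p)) :
    Tendsto (fun h => ∫⁻ t, (∫⁻ u, ‖V (t - h * u) - V t‖ₑ ∂ν) ^ p) (𝓝 0) (𝓝 0) :=
  tendsto_of_tendsto_of_tendsto_of_le_of_le tendsto_const_nhds
    (tendsto_lintegral_eLpNorm_comp_add_sub_rpow hp hVp) (fun _ => zero_le)
    (lintegral_rpow_lintegral_enorm_comp_sub_mul_sub_le hp hV)

end ApproximateIdentity

theorem expMeasure_one_le_volume : expMeasure 1 ≤ volume := by
  refine (withDensity_mono (ae_of_all _ fun u => ?_)).trans_eq withDensity_one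
  change exponentialPDF 1 u ≤ 1
  rw [exponentialPDF_eq, ENNReal.ofReal_le_one]
  split_ifs with hu
  · simpa using hu
  · exact zero_le_one

theorem integrable_comp_sub_mul_expMeasure {E : Type*} [NormedAddCommGroup E] {V : ℝ → E}
    (hV : Integrable V) {h : ℝ} (hh : h ≠ 0) (t : ℝ) :
    Integrable (fun u => V (t - h * u)) (expMeasure 1) := by
  have hsub : Integrable (fun x => V (t - x)) := (integrable_comp_sub_left V t).mpr hV
  exact (hsub.comp_mul_left' hh).mono_measure expMeasure_one_le_volume

section ExpMollify

variable {E : Type*} [NormedAddCommGroup E] [NormedSpace ℝ E]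

def expMollify (h : ℝ) (v : ℝ → E) (t : ℝ) : E :=
  (1 / h) • ∫ s in (0:ℝ)..t, Real.exp ((s - t) / h) • v s

theorem expMollify_eq_integral_expMeasure {T h t : ℝ} (hh : 0 < h) (ht : 0 ≤ t) (htT : t ≤ T)
    (v : ℝ → E) :
    expMollify h v t = ∫ u, (Ioc 0 T).indicator v (t - h * u) ∂expMeasure 1 := by
  set V := (Ioc 0 T).indicator v
  have hdens : ∀ u, (exponentialPDF 1 u).toReal • V (t - h * u)
      = (Ico 0 (t / h)).indicator (fun u => Real.exp (-u) • V (t - h * u)) u := by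
    intro u
    rcases lt_or_ge u 0 with hu | hu
    · simp [exponentialPDF_of_neg hu, hu.not_ge]
    rw [exponentialPDF_of_nonneg hu, ENNReal.toReal_ofReal (by positivity), one_mul, one_mul]
    by_cases hut : u < t / h
    · rw [indicator_of_mem (mem_Ico.2 ⟨hu, hut⟩)]
    · have hneg : t - h * u ≤ 0 := by
        rw [not_lt, div_le_iff₀ hh] at hut
        linarith
      have hV : V (t - h * u) = 0 := indicator_of_notMem (fun hmem => hneg.not_gt hmem.1) _
      rw [indicator_of_notMem (fun hmem => hut hmem.2), hV, smul_zero]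
  calc expMollify h v t = h⁻¹ • ∫ s in (0:ℝ)..t, Real.exp ((s - t) / h) • V s := by
        rw [expMollify, one_div, intervalIntegral.integral_of_le ht,
          intervalIntegral.integral_of_le ht]
        congr 1
        refine setIntegral_congr_fun measurableSet_Ioc fun s hs => ?_
        have hVs : V s = v s := indicator_of_mem (mem_Ioc.2 ⟨hs.1, hs.2.trans htT⟩) _
        rw [hVs]
    _ = ∫ u in (0:ℝ)..t / h, Real.exp (-u) • V (t - h * u) := by
        have hsub := intervalIntegral.integral_comp_sub_mul
          (fun s => Real.exp ((s - t) / h) • V s) (a := 0) (b := t / h) hh.ne' t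
        have harg : ∀ u, (t - h * u - t) / h = -u := fun u => by field_simp; ring
        simp only [harg, mul_zero, sub_zero, mul_div_cancel₀ _ hh.ne', sub_self] at hsub
        exact hsub.symm
    _ = ∫ u in Ico 0 (t / h), Real.exp (-u) • V (t - h * u) := by
        rw [intervalIntegral.integral_of_le (by positivity), integral_Ioc_eq_integral_Ioo,
          integral_Ico_eq_integral_Ioo]
    _ = ∫ u, (exponentialPDF 1 u).toReal • V (t - h * u) := by
        simp_rw [hdens]
        rw [integral_indicator measurableSet_Ico]
    _ = ∫ u, V (t - h * u) ∂expMeasure 1 :=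
        (integral_withDensity_eq_integral_toReal_smul
          (measurable_exponentialPDFReal 1).ennreal_ofReal
          (ae_of_all _ fun _ => ENNReal.ofReal_lt_top) _).symm

theorem enorm_expMollify_sub_le [CompleteSpace E] {T h t : ℝ} (hh : 0 < h) (ht : t ∈ Ioc 0 T) {v : ℝ → E}
    (hv : Integrable ((Ioc 0 T).indicator v)) :
    ‖expMollify h v t - v t‖ₑ
      ≤ ∫⁻ u, ‖(Ioc 0 T).indicator v (t - h * u) - (Ioc 0 T).indicator v t‖ₑ ∂expMeasure 1 := by
  have := isProbabilityMeasure_expMeasure one_pos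
  have hvt : v t = ∫ _, (Ioc 0 T).indicator v t ∂expMeasure 1 := by
    rw [integral_const, probReal_univ, one_smul, indicator_of_mem ht]
  rw [expMollify_eq_integral_expMeasure hh ht.1.le ht.2, hvt, ← edist_eq_enorm_sub]
  simp_rw [← edist_eq_enorm_sub]
  exact edist_integral_le_lintegral_edist (integrable_comp_sub_mul_expMeasure hv hh.ne' t)
    (integrable_const _)

end ExpMollify

section ExpMollifyConvergence

variable {E : Type*} [NormedAddCommGroup E] [NormedSpace ℝ E] [CompleteSpace E] {T p : ℝ}
  {v : ℝ → E}

theorem ofReal_integral_rpow_expMollify_sub_le (hT : 0 ≤ T) (hp : 0 ≤ p) {h : ℝ} (hh : 0 < h)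
    (hv : Integrable ((Ioc 0 T).indicator v)) :
    ENNReal.ofReal (∫ t in (0:ℝ)..T, ‖expMollify h v t - v t‖ ^ p)
      ≤ ∫⁻ t, (∫⁻ u, ‖(Ioc 0 T).indicator v (t - h * u) - (Ioc 0 T).indicator v t‖ₑ
          ∂expMeasure 1) ^ p := by
  rw [intervalIntegral.integral_of_le hT]
  -- `norm_integral_le_lintegral_norm` holds for any function, so the mollification need not be
  -- shown measurable.
  calc ENNReal.ofReal (∫ t in Ioc 0 T, ‖expMollify h v t - v t‖ ^ p)
      ≤ ∫⁻ t in Ioc 0 T, ENNReal.ofReal ‖‖expMollify h v t - v t‖ ^ p‖ :=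
        ENNReal.ofReal_le_of_le_toReal ((Real.le_norm_self _).trans
          (norm_integral_le_lintegral_norm _))
    _ = ∫⁻ t in Ioc 0 T, ‖expMollify h v t - v t‖ₑ ^ p := by
        refine lintegral_congr fun t => ?_
        rw [Real.norm_of_nonneg (by positivity), ← ENNReal.ofReal_rpow_of_nonneg (norm_nonneg _) hp,
          ofReal_norm]
    _ ≤ ∫⁻ t in Ioc 0 T, (∫⁻ u, ‖(Ioc 0 T).indicator v (t - h * u) - (Ioc 0 T).indicator v t‖ₑ
          ∂expMeasure 1) ^ p :=
        setLIntegral_mono' measurableSet_Ioc fun t ht =>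
          ENNReal.rpow_le_rpow (enorm_expMollify_sub_le hh ht hv) hp
    _ ≤ _ := setLIntegral_le_lintegral _ _

theorem tendsto_integral_rpow_expMollify_sub (hT : 0 ≤ T) (hp : 1 ≤ p) (hv : StronglyMeasurable v)
    (hvp : MemLp v (ENNReal.ofReal p) (volume.restrict (Ioc 0 T))) :
    Tendsto (fun h => ∫ t in (0:ℝ)..T, ‖expMollify h v t - v t‖ ^ p) (𝓝[>] 0) (𝓝 0) := by
  have := isProbabilityMeasure_expMeasure one_pos
  have hVint : Integrable ((Ioc 0 T).indicator v) :=
    IntegrableOn.integrable_indicator (hvp.integrable (by simpa using ENNReal.ofReal_le_ofReal hp))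
      measurableSet_Ioc
  have hlim := tendsto_lintegral_rpow_lintegral_enorm_comp_sub_mul_sub (ν := expMeasure 1) hp
    (hv.indicator measurableSet_Ioc) ((memLp_indicator_iff_restrict measurableSet_Ioc).2 hvp)
  have hofReal : Tendsto (fun h => ENNReal.ofReal (∫ t in (0:ℝ)..T, ‖expMollify h v t - v t‖ ^ p))
      (𝓝[>] 0) (𝓝 0) :=
    tendsto_of_tendsto_of_tendsto_of_le_of_le' tendsto_const_nhds
      (hlim.mono_left nhdsWithin_le_nhds) (Eventually.of_forall fun _ => zero_le)
      (eventually_nhdsWithin_of_forall fun _ hh =>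
        ofReal_integral_rpow_expMollify_sub_le hT (by linarith) hh hVint)
  refine ((ENNReal.tendsto_toReal ENNReal.zero_ne_top).comp hofReal).congr fun h => ?_
  exact ENNReal.toReal_ofReal (intervalIntegral.integral_nonneg hT fun _ _ => by positivity)

end ExpMollifyConvergence

/-- The exponential time mollifications `⟦v⟧_h(t) := (1/h) ∫_0^t e^{(s−t)/h} v(s) ds`
converge to `v` strongly in `L^p((0,T), ℝ^N)` as `h → 0⁺`, for `p ∈ [1, ∞)`. -/
theorem expMollification_tendsto_lp {N : ℕ} (T p : ℝ) (hT : 0 < T) (hp : 1 ≤ p)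
    (v : ℝ → EuclideanSpace ℝ (Fin N)) (hv : Measurable v)
    (hvp : IntegrableOn (fun t => ‖v t‖ ^ p) (Set.Ioc 0 T)) :
    Tendsto
      (fun h : ℝ =>
        ∫ t in (0:ℝ)..T, ‖((1 / h) • ∫ s in (0:ℝ)..t, Real.exp ((s - t) / h) • v s) - v t‖ ^ p)
      (nhdsWithin 0 (Set.Ioi 0)) (nhds 0) := by
  have hmem : MemLp v (ENNReal.ofReal p) (volume.restrict (Ioc 0 T)) :=
    (integrable_norm_rpow_iff hv.aestronglyMeasurable (by simpa using zero_lt_one.trans_le hp)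
      ENNReal.ofReal_ne_top).1 (by rwa [ENNReal.toReal_ofReal (by linarith)])
  exact tendsto_integral_rpow_expMollify_sub hT.le hp hv.stronglyMeasurable hmem

end
end
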